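/- arXiv:0712.2308 — 2 statements merged into one kernel-verified Lean document; each statement's English description precedes it below -/
import Mathlib

section
/- Let J ⊂ I be monomial ideals of S = K[x_1,…,x_n] and g ∈ ℕ^n with a ≤ g for all a with x^a ∈ I \ J. If D is a Stanley decomposition of I/J which is induced by a prime filtration of I/J, then there exists a partition 𝒫 of P^g_{I/J} into intervals such that the associated Stanley decomposition D(𝒫) is induced by a prime filtration and sdepth D(𝒫) ≥ sdepth D. -/
/-!
Replace each Stanley space `x^u K[Z]` of `D` by the interval `[u, d]`, where `d` agrees with `g`
on `Z` and with `u` elsewhere: `[u, d]` is the set of exponents of `x^u K[Z]` bounded by `g`, so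
these intervals partition `P^g_{I/J}`, and `Z ⊆ Z_d` gives `sdepth D(𝒫) ≥ sdepth D`. Every
`c' ∈ [u, d]` that agrees with `u` on `Z_d` equals `u`, so `D(𝒫)` consists of the spaces
`x^u K[Z_d]`. These differ from `x^u K[Z]` only by monomials exceeding `g` in a coordinate of
`Z_d \ Z`; as `x^u ∈ I` such monomials lie in `J`. Hence the partial sums of `D(𝒫)`, taken in the
order of the filtration inducing `D`, agree with those of `D` modulo `J` and remain `S`-submodules.
-/

open MvPolynomial

namespace StanleyPaper

variable {n : ℕ} {K : Type} [Field K]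

/-- A monomial ideal: an ideal generated by monomials. -/
def IsMonomialIdeal (I : Ideal (MvPolynomial (Fin n) K)) : Prop :=
  ∃ A : Set (Fin n →₀ ℕ),
    I = Ideal.span ((fun a => (monomial a (1 : K) : MvPolynomial (Fin n) K)) '' A)

/-- The set of exponent vectors `a` with `x^a ∈ I \ J`. -/
def expSet (I J : Ideal (MvPolynomial (Fin n) K)) : Set (Fin n →₀ ℕ) :=
  {a | (monomial a (1 : K) : MvPolynomial (Fin n) K) ∈ I ∧
    (monomial a (1 : K) : MvPolynomial (Fin n) K) ∉ J}

/-- The characteristic poset `P^g_{I/J}` of `I/J` with respect to `g`. -/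
def charPoset (I J : Ideal (MvPolynomial (Fin n) K)) (g : Fin n →₀ ℕ) : Set (Fin n →₀ ℕ) :=
  {a | a ∈ expSet I J ∧ a ≤ g}

/-- `Z_b = { x_j : b(j) = g(j) }`. -/
def Zset (g b : Fin n →₀ ℕ) : Finset (Fin n) :=
  Finset.univ.filter fun j => b j = g j

/-- `ρ(b) = |Z_b|`. -/
def rho (g b : Fin n →₀ ℕ) : ℕ := (Zset g b).card

/-- The Stanley space `x^c K[Z]`, as a `K`-subspace of `S = K[x_1,…,x_n]`. -/
noncomputable def stanleySpace (K : Type) [Field K] (c : Fin n →₀ ℕ) (Z : Finset (Fin n)) :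
    Submodule K (MvPolynomial (Fin n) K) :=
  Submodule.span K
    ((fun a => (monomial a (1 : K) : MvPolynomial (Fin n) K)) ''
      {a | c ≤ a ∧ ∀ j ∉ Z, a j = c j})

/-- The `K`-span of the monomials of `I \ J`; this is the standard model for the
`ℤⁿ`-graded `K`-vector space `I/J`. -/
noncomputable def quotSpace (I J : Ideal (MvPolynomial (Fin n) K)) : Submodule K (MvPolynomial (Fin n) K) :=
  Submodule.span K ((fun a => (monomial a (1 : K) : MvPolynomial (Fin n) K)) '' expSet I J)

/-- The `K`-span of the monomials of `J`. -/
noncomputable def Jspan (J : Ideal (MvPolynomial (Fin n) K)) : Submodule K (MvPolynomial (Fin n) K) :=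
  Submodule.span K ((fun a => (monomial a (1 : K) : MvPolynomial (Fin n) K)) ''
    {a | (monomial a (1 : K) : MvPolynomial (Fin n) K) ∈ J})

/-- A (graded) `K`-subspace `W` of the model of `I/J` corresponds to an (`ℤⁿ`-graded)
`S`-submodule of `I/J` iff it is stable under multiplication by the variables, modulo `J`. -/
def IsSSubmoduleModJ (J : Ideal (MvPolynomial (Fin n) K))
    (W : Submodule K (MvPolynomial (Fin n) K)) : Prop :=
  ∀ j : Fin n, ∀ p ∈ W, (X j : MvPolynomial (Fin n) K) * p ∈ W ⊔ Jspan J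

/-- A partition of a (finite) subposet `P` of `ℕⁿ` into intervals `[c i, d i]`. -/
structure IntervalPartition (P : Set (Fin n →₀ ℕ)) where
  r : ℕ
  c : Fin r → (Fin n →₀ ℕ)
  d : Fin r → (Fin n →₀ ℕ)
  le : ∀ i, c i ≤ d i
  mem_c : ∀ i, c i ∈ P
  mem_d : ∀ i, d i ∈ P
  sub : ∀ i, Set.Icc (c i) (d i) ⊆ P
  cover : ∀ a ∈ P, ∃ i, a ∈ Set.Icc (c i) (d i)
  disj : ∀ i j, i ≠ j → Disjoint (Set.Icc (c i) (d i)) (Set.Icc (c j) (d j))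

/-- The inner index set of the `i`-th interval: all `c' ∈ [c i, d i]` with
`c'(j) = c i (j)` for all `j` with `x_j ∈ Z_{d i}`. -/
def IntervalPartition.innerSet {P : Set (Fin n →₀ ℕ)} (Pt : IntervalPartition P)
    (g : Fin n →₀ ℕ) (i : Fin Pt.r) : Set (Fin n →₀ ℕ) :=
  {c' | c' ∈ Set.Icc (Pt.c i) (Pt.d i) ∧ ∀ j ∈ Zset g (Pt.d i), c' j = Pt.c i j}

/-- The index set of the Stanley decomposition `D(Pt)` associated to a partition `Pt`. -/
def IntervalPartition.DPIdx {P : Set (Fin n →₀ ℕ)} (Pt : IntervalPartition P)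
    (g : Fin n →₀ ℕ) : Type :=
  Σ i : Fin Pt.r, Pt.innerSet g i

/-- The family of Stanley spaces of the decomposition `D(Pt)`:
the summand at `(i, c')` is `x^{c'} K[Z_{d i}]`. -/
noncomputable def IntervalPartition.DPfam (K : Type) [Field K] {P : Set (Fin n →₀ ℕ)}
    (Pt : IntervalPartition P) (g : Fin n →₀ ℕ) (x : Pt.DPIdx g) :
    Submodule K (MvPolynomial (Fin n) K) :=
  stanleySpace K (x.2 : Fin n →₀ ℕ) (Zset g (Pt.d x.1))

/-- `sdepth D(Pt) = min { ρ(d i) }`. -/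
noncomputable def IntervalPartition.sdepthDP {P : Set (Fin n →₀ ℕ)} (Pt : IntervalPartition P)
    (g : Fin n →₀ ℕ) : ℕ :=
  sInf {k | ∃ i : Fin Pt.r, k = rho g (Pt.d i)}

/-- The property that the partial unions `⋃_{i < t} [c i, d i]` are poset ideals
of the characteristic poset, for all `t`. -/
def IntervalPartition.InitialsArePosetIdeals {P : Set (Fin n →₀ ℕ)}
    (Pt : IntervalPartition P) : Prop :=
  ∀ t : ℕ, ∀ a b : Fin n →₀ ℕ,
    (∃ i : Fin Pt.r, (i : ℕ) < t ∧ a ∈ Set.Icc (Pt.c i) (Pt.d i)) → b ∈ P → b ≤ a →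
      ∃ i : Fin Pt.r, (i : ℕ) < t ∧ b ∈ Set.Icc (Pt.c i) (Pt.d i)

/-- The family `(x^{u i} K[Z i])_{i : ι}` is a Stanley decomposition of `I/J`:
each Stanley space is a free `K[Z i]`-module (its natural monomial basis is
`K`-linearly independent), the spaces are independent, and they sum to `I/J`. -/
def IsStanleyDecompOf (I J : Ideal (MvPolynomial (Fin n) K)) {ι : Type}
    (u : ι → (Fin n →₀ ℕ)) (Z : ι → Finset (Fin n)) : Prop :=
  (∀ i, LinearIndependent K fun e : {e : Fin n →₀ ℕ // ∀ j ∉ Z i, e j = 0} =>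
    (monomial (u i + (e : Fin n →₀ ℕ)) (1 : K) : MvPolynomial (Fin n) K)) ∧
  iSupIndep (fun i => stanleySpace K (u i) (Z i)) ∧
  (⨆ i, stanleySpace K (u i) (Z i)) = quotSpace I J

/-- A (finite) Stanley decomposition of `I/J`. -/
structure StanleyDec (I J : Ideal (MvPolynomial (Fin n) K)) where
  m : ℕ
  u : Fin m → (Fin n →₀ ℕ)
  Z : Fin m → Finset (Fin n)
  isDecomp : IsStanleyDecompOf I J u Z

/-- The Stanley depth of a Stanley decomposition: `min |Z i|`. -/
noncomputable def StanleyDec.sdepth {I J : Ideal (MvPolynomial (Fin n) K)} (D : StanleyDec I J) : ℕ :=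
  sInf {k | ∃ i, k = (D.Z i).card}

/-- The Stanley depth of `I/J`. -/
noncomputable def sdepthQ (I J : Ideal (MvPolynomial (Fin n) K)) : ℕ :=
  sSup {k | ∃ D : StanleyDec I J, k = D.sdepth}

/-- A Stanley decomposition of `I/J` is induced by a prime filtration iff its Stanley
spaces can be ordered so that all partial sums are (`ℤⁿ`-graded) `S`-submodules of `I/J`. -/
def StanleyDec.InducedByPrimeFiltration {I J : Ideal (MvPolynomial (Fin n) K)}
    (D : StanleyDec I J) : Prop :=
  ∃ σ : Equiv.Perm (Fin D.m), ∀ t : ℕ,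
    IsSSubmoduleModJ J
      (⨆ i : Fin D.m, ⨆ _ : (σ i : ℕ) < t, stanleySpace K (D.u i) (D.Z i))

/-- `D(Pt)` is induced by a prime filtration: its Stanley spaces can be ordered so that
all partial sums are (`ℤⁿ`-graded) `S`-submodules of `I/J`. -/
def IntervalPartition.DPInducedByPrimeFiltration (J : Ideal (MvPolynomial (Fin n) K))
    {P : Set (Fin n →₀ ℕ)} (Pt : IntervalPartition P) (g : Fin n →₀ ℕ) : Prop :=
  ∃ (N : ℕ) (e : Fin N → Pt.DPIdx g), Function.Bijective e ∧ ∀ t : ℕ,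
    IsSSubmoduleModJ J (⨆ s : Fin N, ⨆ _ : (s : ℕ) < t, Pt.DPfam K g (e s))

/-- A monomial prime ideal: an ideal generated by a subset of the variables. -/
def IsMonomialPrime (P : Ideal (MvPolynomial (Fin n) K)) : Prop :=
  ∃ V : Finset (Fin n), P = Ideal.span ((fun j => (X j : MvPolynomial (Fin n) K)) '' ↑V)

/-- A prime filtration of `I/J` (in the monomial model): a chain
`0 = W 0 ⊂ W 1 ⊂ ⋯ ⊂ W m = I/J` of `ℤⁿ`-graded `S`-submodules of `I/J` such that
`W (i+1) / W i ≅ (S/P i)(-a i)` with `P i` a monomial prime ideal. -/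
structure QPrimeFiltration (I J : Ideal (MvPolynomial (Fin n) K)) where
  m : ℕ
  W : Fin (m + 1) → Submodule K (MvPolynomial (Fin n) K)
  a : Fin m → (Fin n →₀ ℕ)
  P : Fin m → Ideal (MvPolynomial (Fin n) K)
  bot : W 0 = ⊥
  top : W (Fin.last m) = quotSpace I J
  graded : ∀ i, ∃ E : Set (Fin n →₀ ℕ),
    W i = Submodule.span K ((fun a => (monomial a (1 : K) : MvPolynomial (Fin n) K)) '' E)
  stable : ∀ i, IsSSubmoduleModJ J (W i)
  amem : ∀ i, a i ∈ expSet I J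
  gen : ∀ i, W i.succ = W i.castSucc ⊔
    Submodule.span K ((fun e => (monomial e (1 : K) : MvPolynomial (Fin n) K)) ''
      {e | a i ≤ e ∧ (monomial e (1 : K) : MvPolynomial (Fin n) K) ∉ J})
  ann : ∀ i, ∀ s : MvPolynomial (Fin n) K,
    s * monomial (a i) (1 : K) ∈ W i.castSucc ⊔ Jspan J ↔ s ∈ P i
  isPrime : ∀ i, IsMonomialPrime (P i)

/-- `fdepth ℱ = min { dim S/P : P ∈ supp ℱ }`. -/
noncomputable def QPrimeFiltration.fdepth {I J : Ideal (MvPolynomial (Fin n) K)}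
    (F : QPrimeFiltration I J) : WithBot ℕ∞ :=
  ⨅ i : Fin F.m, ringKrullDim (MvPolynomial (Fin n) K ⧸ F.P i)

/-- `fdepth I/J = max { fdepth ℱ : ℱ a prime filtration of I/J }`. -/
noncomputable def fdepthQ (I J : Ideal (MvPolynomial (Fin n) K)) : WithBot ℕ∞ :=
  ⨆ F : QPrimeFiltration I J, F.fdepth

/-- The graded maximal ideal `(x_1, …, x_n)`. -/
noncomputable def maxIdeal (n : ℕ) (K : Type) [Field K] : Ideal (MvPolynomial (Fin n) K) :=
  Ideal.span (Set.range (X : Fin n → MvPolynomial (Fin n) K))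

/-- The depth of a module over `S = K[x_1,…,x_n]` with respect to the graded maximal
ideal: the maximal length of an `M`-regular sequence of elements of `(x_1,…,x_n)`. -/
noncomputable def moduleDepth (n : ℕ) (K : Type) [Field K] (M : Type)
    [AddCommGroup M] [Module (MvPolynomial (Fin n) K) M] : ℕ :=
  sSup {r | ∃ rs : List (MvPolynomial (Fin n) K), rs.length = r ∧
    (∀ s ∈ rs, s ∈ maxIdeal n K) ∧ RingTheory.Sequence.IsRegular M rs}

/-- The `S`-module `I/J`. -/
abbrev QuotMod (I J : Ideal (MvPolynomial (Fin n) K)) :=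
  ↥I ⧸ (Submodule.comap I.subtype J)

section RestrictSupport

variable {σ R : Type*} [CommSemiring R]

theorem restrictSupport_union (s t : Set (σ →₀ ℕ)) :
    restrictSupport R (s ∪ t) = restrictSupport R s ⊔ restrictSupport R t := by
  simp only [restrictSupport_eq_span, Set.image_union, Submodule.span_union]

theorem iSup_restrictSupport {ι : Type*} (s : ι → Set (σ →₀ ℕ)) :
    ⨆ i, restrictSupport R (s i) = restrictSupport R (⋃ i, s i) := by
  simp only [restrictSupport_eq_span, Set.image_iUnion, Submodule.span_iUnion]

theorem monomial_one_mem_of_le {I : Ideal (MvPolynomial σ R)} {c a : σ →₀ ℕ}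
    (hc : monomial c (1 : R) ∈ I) (hca : c ≤ a) : monomial a (1 : R) ∈ I := by
  rw [← tsub_add_cancel_of_le hca, ← one_mul (1 : R), ← monomial_mul]
  exact I.mul_mem_left _ hc

variable [Nontrivial R]

theorem restrictSupport_injective :
    Function.Injective (restrictSupport R : Set (σ →₀ ℕ) → Submodule R (MvPolynomial σ R)) :=
  fun s t h => Set.ext fun m => by
    simpa using congrArg (monomial m (1 : R) ∈ ·) h

theorem disjoint_of_disjoint_restrictSupport {s t : Set (σ →₀ ℕ)}
    (h : Disjoint (restrictSupport R s) (restrictSupport R t)) : Disjoint s t :=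
  Set.disjoint_left.2 fun m hs ht => one_ne_zero <| monomial_eq_zero.1 <|
    Submodule.disjoint_def.1 h (monomial m (1 : R)) (by simp [hs]) (by simp [ht])

end RestrictSupport

theorem biSup_sup_eq_of_sup_eq {α ι : Type*} [CompleteLattice α] {p : ι → Prop}
    {f f' : ι → α} {c : α} (h : ∀ i, f i ⊔ c = f' i ⊔ c) :
    (⨆ i, ⨆ _ : p i, f i) ⊔ c = (⨆ i, ⨆ _ : p i, f' i) ⊔ c := by
  have key : ∀ A B : ι → α, (∀ i, A i ≤ B i ⊔ c) →
      (⨆ i, ⨆ _ : p i, A i) ⊔ c ≤ (⨆ i, ⨆ _ : p i, B i) ⊔ c := fun A B hAB =>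
    sup_le (iSup₂_le fun i hi =>
      (hAB i).trans (sup_le_sup_right (le_iSup₂ (f := fun i (_ : p i) => B i) i hi) c)) le_sup_right
  exact le_antisymm (key f f' fun i => le_sup_left.trans (h i).le)
    (key f' f fun i => le_sup_left.trans (h i).ge)

theorem Nat.sInf_exists_eq_mono {ι : Type*} {f f' : ι → ℕ} (h : ∀ i, f i ≤ f' i) :
    sInf {k | ∃ i, k = f i} ≤ sInf {k | ∃ i, k = f' i} := by
  have range_eq (f : ι → ℕ) : {k | ∃ i, k = f i} = Set.range f := by
    simp only [Set.range, eq_comm]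
  rw [range_eq, range_eq]
  exact ciInf_mono (OrderBot.bddBelow _) h

def monomialExps (J : Ideal (MvPolynomial (Fin n) K)) : Set (Fin n →₀ ℕ) :=
  {a | (monomial a (1 : K) : MvPolynomial (Fin n) K) ∈ J}

def stanleyCone (c : Fin n →₀ ℕ) (Z : Finset (Fin n)) : Set (Fin n →₀ ℕ) :=
  {a | c ≤ a ∧ ∀ j ∉ Z, a j = c j}

theorem stanleySpace_eq_restrictSupport (c : Fin n →₀ ℕ) (Z : Finset (Fin n)) :
    stanleySpace K c Z = restrictSupport K (stanleyCone c Z) :=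
  (restrictSupport_eq_span K _).symm

theorem quotSpace_eq_restrictSupport (I J : Ideal (MvPolynomial (Fin n) K)) :
    quotSpace I J = restrictSupport K (expSet I J) :=
  (restrictSupport_eq_span K _).symm

theorem Jspan_eq_restrictSupport (J : Ideal (MvPolynomial (Fin n) K)) :
    Jspan J = restrictSupport K (monomialExps J) :=
  (restrictSupport_eq_span K _).symm

theorem X_mul_mem_Jspan {J : Ideal (MvPolynomial (Fin n) K)} (j : Fin n)
    {q : MvPolynomial (Fin n) K} (hq : q ∈ Jspan J) : X j * q ∈ Jspan J := by
  have : Jspan J ≤ (Jspan J).comap (LinearMap.mulLeft K (X j)) := by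
    refine Submodule.span_le.2 ?_
    rintro _ ⟨a, ha, rfl⟩
    have hXa : X j * monomial a (1 : K) = monomial (Finsupp.single j 1 + a) 1 := by
      rw [X, monomial_mul, one_mul]
    refine Submodule.subset_span ⟨Finsupp.single j 1 + a, ?_, hXa.symm⟩
    rw [Set.mem_ofPred_eq, ← hXa]
    exact J.mul_mem_left _ ha
  exact this hq

theorem IsSSubmoduleModJ.of_sup_Jspan_eq {J : Ideal (MvPolynomial (Fin n) K)}
    {W W' : Submodule K (MvPolynomial (Fin n) K)} (hW : IsSSubmoduleModJ J W)
    (h : W ⊔ Jspan J = W' ⊔ Jspan J) : IsSSubmoduleModJ J W' := by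
  intro j p hp
  obtain ⟨v, hv, q, hq, rfl⟩ := Submodule.mem_sup.1 (h ▸ Submodule.mem_sup_left hp)
  rw [mul_add, ← h]
  exact add_mem (hW j v hv) (Submodule.mem_sup_right (X_mul_mem_Jspan j hq))

theorem stanleyCone_mono {c : Fin n →₀ ℕ} {Z Z' : Finset (Fin n)} (h : Z ⊆ Z') :
    stanleyCone c Z ⊆ stanleyCone c Z' :=
  fun _ ⟨hca, hZ⟩ => ⟨hca, fun j hj => hZ j fun hjZ => hj (h hjZ)⟩

noncomputable def upperCorner (g c : Fin n →₀ ℕ) (Z : Finset (Fin n)) : Fin n →₀ ℕ :=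
  Finsupp.equivFunOnFinite.symm fun j => if j ∈ Z then g j else c j

@[simp]
theorem upperCorner_apply (g c : Fin n →₀ ℕ) (Z : Finset (Fin n)) (j : Fin n) :
    upperCorner g c Z j = if j ∈ Z then g j else c j :=
  rfl

theorem le_upperCorner {g c : Fin n →₀ ℕ} (hcg : c ≤ g) (Z : Finset (Fin n)) :
    c ≤ upperCorner g c Z := fun j => by
  by_cases hj : j ∈ Z <;> simp [hj, hcg j]

theorem subset_Zset_upperCorner (g c : Fin n →₀ ℕ) (Z : Finset (Fin n)) :
    Z ⊆ Zset g (upperCorner g c Z) := fun j hj => by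
  simp [Zset, hj]

theorem Icc_upperCorner {g c : Fin n →₀ ℕ} (hcg : c ≤ g) (Z : Finset (Fin n)) :
    Set.Icc c (upperCorner g c Z) = stanleyCone c Z ∩ Set.Iic g := by
  ext a
  simp only [Set.mem_Icc, Set.mem_inter_iff, Set.mem_Iic, stanleyCone, Set.mem_ofPred_eq,
    Finsupp.le_def, upperCorner_apply]
  refine ⟨fun ⟨hca, hag⟩ => ⟨⟨hca, fun j hj => ?_⟩, fun j => ?_⟩,
    fun ⟨⟨hca, hZ⟩, hag⟩ => ⟨hca, fun j => ?_⟩⟩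
  · exact le_antisymm (by simpa [hj] using hag j) (hca j)
  · by_cases hj : j ∈ Z <;> simpa [hj] using (hag j).trans (by simp [hj, hcg j])
  · by_cases hj : j ∈ Z <;> simp [hj, hag j, hZ j]

theorem stanleyCone_Zset_upperCorner_subset {I J : Ideal (MvPolynomial (Fin n) K)}
    {g c : Fin n →₀ ℕ} (hc : (monomial c (1 : K) : MvPolynomial (Fin n) K) ∈ I)
    (hg : ∀ a ∈ expSet I J, a ≤ g) (Z : Finset (Fin n)) :
    stanleyCone c (Zset g (upperCorner g c Z)) ⊆ stanleyCone c Z ∪ monomialExps J := by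
  rintro a ⟨hca, hZ⟩
  by_cases haJ : a ∈ monomialExps J
  · exact Or.inr haJ
  refine Or.inl ⟨hca, fun j hj => ?_⟩
  by_cases hjZ : j ∈ Zset g (upperCorner g c Z)
  · have hcj : c j = g j := by simpa [Zset, hj] using hjZ
    exact le_antisymm (hcj ▸ hg a ⟨monomial_one_mem_of_le hc hca, haJ⟩ j) (hca j)
  · exact hZ j hjZ

theorem stanleySpace_Zset_upperCorner_sup_Jspan {I J : Ideal (MvPolynomial (Fin n) K)}
    {g c : Fin n →₀ ℕ} (hc : (monomial c (1 : K) : MvPolynomial (Fin n) K) ∈ I)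
    (hg : ∀ a ∈ expSet I J, a ≤ g) (Z : Finset (Fin n)) :
    stanleySpace K c (Zset g (upperCorner g c Z)) ⊔ Jspan J = stanleySpace K c Z ⊔ Jspan J := by
  simp only [stanleySpace_eq_restrictSupport, Jspan_eq_restrictSupport, ← restrictSupport_union]
  exact congrArg _ <| subset_antisymm
    (Set.union_subset (stanleyCone_Zset_upperCorner_subset hc hg Z) Set.subset_union_right)
    (Set.union_subset_union_left _ (stanleyCone_mono (subset_Zset_upperCorner g c Z)))

theorem eq_of_mem_Icc_upperCorner {g c a : Fin n →₀ ℕ} {Z : Finset (Fin n)}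
    (ha : a ∈ Set.Icc c (upperCorner g c Z))
    (hZ : ∀ j ∈ Zset g (upperCorner g c Z), a j = c j) : a = c := by
  ext j
  by_cases hj : j ∈ Z
  · exact hZ j (subset_Zset_upperCorner g c Z hj)
  · exact le_antisymm (by simpa [hj] using ha.2 j) (ha.1 j)

namespace StanleyDec

variable {I J : Ideal (MvPolynomial (Fin n) K)} (D : StanleyDec I J) {g : Fin n →₀ ℕ}

theorem iUnion_stanleyCone : ⋃ i, stanleyCone (D.u i) (D.Z i) = expSet I J := by
  apply restrictSupport_injective (R := K)
  rw [← iSup_restrictSupport, ← quotSpace_eq_restrictSupport, ← D.isDecomp.2.2]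
  simp only [stanleySpace_eq_restrictSupport]

theorem pairwise_disjoint_stanleyCone :
    Pairwise (Function.onFun Disjoint fun i => stanleyCone (D.u i) (D.Z i)) := fun i j hij =>
  disjoint_of_disjoint_restrictSupport (R := K) <| by
    simpa only [stanleySpace_eq_restrictSupport] using D.isDecomp.2.1.pairwiseDisjoint hij

theorem u_mem_expSet (i : Fin D.m) : D.u i ∈ expSet I J :=
  D.iUnion_stanleyCone ▸ Set.mem_iUnion_of_mem i ⟨le_rfl, fun _ _ => rfl⟩

theorem Icc_upperCorner_eq (hg : ∀ a ∈ expSet I J, a ≤ g) (i : Fin D.m) :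
    Set.Icc (D.u i) (upperCorner g (D.u i) (D.Z i)) =
      stanleyCone (D.u i) (D.Z i) ∩ Set.Iic g :=
  Icc_upperCorner (hg _ (D.u_mem_expSet i)) (D.Z i)

theorem Icc_upperCorner_subset_charPoset (hg : ∀ a ∈ expSet I J, a ≤ g) (i : Fin D.m) :
    Set.Icc (D.u i) (upperCorner g (D.u i) (D.Z i)) ⊆ charPoset I J g := by
  rw [D.Icc_upperCorner_eq hg]
  exact fun a ⟨ha, hag⟩ => ⟨D.iUnion_stanleyCone ▸ Set.mem_iUnion_of_mem i ha, hag⟩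

variable (hg : ∀ a ∈ expSet I J, a ≤ g)

noncomputable def intervalPartition : IntervalPartition (charPoset I J g) where
  r := D.m
  c := D.u
  d i := upperCorner g (D.u i) (D.Z i)
  le i := le_upperCorner (hg _ (D.u_mem_expSet i)) (D.Z i)
  mem_c i := D.Icc_upperCorner_subset_charPoset hg i
    (Set.left_mem_Icc.2 (le_upperCorner (hg _ (D.u_mem_expSet i)) (D.Z i)))
  mem_d i := D.Icc_upperCorner_subset_charPoset hg i
    (Set.right_mem_Icc.2 (le_upperCorner (hg _ (D.u_mem_expSet i)) (D.Z i)))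
  sub := D.Icc_upperCorner_subset_charPoset hg
  cover a ha := by
    obtain ⟨i, hi⟩ := Set.mem_iUnion.1 (D.iUnion_stanleyCone.symm ▸ ha.1)
    exact ⟨i, D.Icc_upperCorner_eq hg i ▸ ⟨hi, ha.2⟩⟩
  disj i j hij := by
    simp only [D.Icc_upperCorner_eq hg]
    exact (D.pairwise_disjoint_stanleyCone hij).mono Set.inter_subset_left Set.inter_subset_left

theorem sdepth_le_sdepthDP_intervalPartition : D.sdepth ≤ (D.intervalPartition hg).sdepthDP g :=
  Nat.sInf_exists_eq_mono fun i => Finset.card_le_card (subset_Zset_upperCorner g (D.u i) (D.Z i))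

theorem innerSet_intervalPartition (i : Fin D.m) :
    (D.intervalPartition hg).innerSet g i = {D.u i} := by
  ext a
  refine ⟨fun ⟨ha, hZ⟩ => eq_of_mem_Icc_upperCorner ha hZ, ?_⟩
  rintro rfl
  exact ⟨Set.left_mem_Icc.2 ((D.intervalPartition hg).le i), fun _ _ => rfl⟩

def toDPIdx (i : Fin D.m) : (D.intervalPartition hg).DPIdx g :=
  ⟨i, D.u i, by rw [D.innerSet_intervalPartition hg i]; exact Set.mem_singleton _⟩

theorem bijective_toDPIdx : Function.Bijective (D.toDPIdx hg) := by
  refine ⟨fun i j h => congrArg Sigma.fst h, fun ⟨i, a, ha⟩ => ⟨i, ?_⟩⟩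
  rw [D.innerSet_intervalPartition hg i] at ha
  exact Sigma.subtype_ext rfl ha.symm

theorem sup_Jspan_biSup_stanleySpace_eq (p : Fin D.m → Prop) :
    (⨆ i, ⨆ _ : p i, (D.intervalPartition hg).DPfam K g (D.toDPIdx hg i)) ⊔ Jspan J =
      (⨆ i, ⨆ _ : p i, stanleySpace K (D.u i) (D.Z i)) ⊔ Jspan J :=
  biSup_sup_eq_of_sup_eq fun i =>
    stanleySpace_Zset_upperCorner_sup_Jspan (D.u_mem_expSet i).1 hg (D.Z i)

theorem InducedByPrimeFiltration.dpInducedByPrimeFiltration_intervalPartition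
    {D : StanleyDec I J} (hD : D.InducedByPrimeFiltration) :
    (D.intervalPartition hg).DPInducedByPrimeFiltration J g := by
  obtain ⟨σ, hσ⟩ := hD
  refine ⟨D.m, D.toDPIdx hg ∘ σ.symm,
    (D.bijective_toDPIdx hg).comp σ.symm.bijective, fun t => (hσ t).of_sup_Jspan_eq ?_⟩
  rw [← D.sup_Jspan_biSup_stanleySpace_eq hg, ← σ.symm.iSup_comp]
  simp

end StanleyDec

theorem induced_decomposition_dominated_by_induced_partition_general
    {n : ℕ} {K : Type} [Field K] (I J : Ideal (MvPolynomial (Fin n) K))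
    (g : Fin n →₀ ℕ) (hg : ∀ a ∈ expSet I J, a ≤ g)
    (D : StanleyDec I J) (hD : D.InducedByPrimeFiltration) :
    ∃ Pt : IntervalPartition (charPoset I J g),
      Pt.DPInducedByPrimeFiltration J g ∧ D.sdepth ≤ Pt.sdepthDP g :=
  ⟨D.intervalPartition hg, hD.dpInducedByPrimeFiltration_intervalPartition hg,
    D.sdepth_le_sdepthDP_intervalPartition hg⟩

/-- **Theorem.** If a Stanley decomposition `D` of `I/J` is induced by a prime filtration,
then there is a partition `Pt` of `P^g_{I/J}` such that `D(Pt)` is induced by a prime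
filtration and `sdepth D(Pt) ≥ sdepth D`. -/
theorem induced_decomposition_dominated_by_induced_partition
    {n : ℕ} {K : Type} [Field K] (I J : Ideal (MvPolynomial (Fin n) K))
    (hI : IsMonomialIdeal I) (hJ : IsMonomialIdeal J) (hJI : J < I)
    (g : Fin n →₀ ℕ) (hg : ∀ a ∈ expSet I J, a ≤ g)
    (D : StanleyDec I J) (hD : D.InducedByPrimeFiltration) :
    ∃ Pt : IntervalPartition (charPoset I J g),
      Pt.DPInducedByPrimeFiltration J g ∧ D.sdepth ≤ Pt.sdepthDP g :=
  induced_decomposition_dominated_by_induced_partition_general I J g hg D hD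

end StanleyPaper
end

section
/- Let M be a finitely generated ℤ^n-graded module over S = K[x_1,…,x_n] and let D : M = ⊕_{i=1}^m u_iK[Z_i] be a Stanley decomposition of M. Then D is induced by a prime filtration of M if and only if, after a suitable relabeling of the summands, M_j = ⊕_{i=1}^j u_iK[Z_i] is a ℤ^n-graded S-submodule of M for every j = 1,…,m. -/
open MvPolynomial

namespace StanleyPaper

variable (n : ℕ) (K : Type) [Field K]
variable (M : Type) [AddCommGroup M] [Module K M]
  [Module (MvPolynomial (Fin n) K) M] [IsScalarTower K (MvPolynomial (Fin n) K) M]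

/-- A `ℤⁿ`-grading of an `S = K[x_1,…,x_n]`-module `M`: a direct sum decomposition
`M = ⊕_{a ∈ ℤⁿ} M_a` into `K`-subspaces compatible with the multigrading of `S`. -/
structure Multigrading where
  grade : (Fin n → ℤ) → Submodule K M
  internal : DirectSum.IsInternal grade
  smul_mem : ∀ (d : Fin n →₀ ℕ) (a : Fin n → ℤ) (x : M), x ∈ grade a →
    (monomial d (1 : K) : MvPolynomial (Fin n) K) • x ∈ grade (a + fun i => (d i : ℤ))

variable {n K M}

/-- The Stanley space `u K[Z] ⊆ M`: the `K`-subspace generated by all `x^e • u` with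
`e` supported in `Z`. -/
def mStanleySpace (u : M) (Z : Finset (Fin n)) : Submodule K M :=
  Submodule.span K
    ((fun e : Fin n →₀ ℕ => (monomial e (1 : K) : MvPolynomial (Fin n) K) • u) ''
      {e | ∀ j ∉ Z, e j = 0})

/-- A Stanley decomposition of the `ℤⁿ`-graded module `M`: a finite direct sum
decomposition `M = ⊕ u_i K[Z_i]` of the `ℤⁿ`-graded `K`-vector space `M` into Stanley
spaces, each of which is a free `K[Z_i]`-module. -/
structure MStanleyDec (gr : Multigrading n K M) where
  m : ℕ
  u : Fin m → M
  deg : Fin m → (Fin n → ℤ)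
  Z : Fin m → Finset (Fin n)
  homog : ∀ i, u i ∈ gr.grade (deg i)
  free : ∀ i, LinearIndependent K fun e : {e : Fin n →₀ ℕ // ∀ j ∉ Z i, e j = 0} =>
    (monomial (e : Fin n →₀ ℕ) (1 : K) : MvPolynomial (Fin n) K) • u i
  internal : DirectSum.IsInternal fun i => mStanleySpace (K := K) (u i) (Z i)

/-- `sdepth D = min |Z_i|`. -/
noncomputable def MStanleyDec.sdepth {gr : Multigrading n K M} (D : MStanleyDec gr) : ℕ :=
  sInf {k | ∃ i, k = (D.Z i).card}

/-- The Stanley depth of the `ℤⁿ`-graded module `M`. -/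
noncomputable def msdepth (gr : Multigrading n K M) : ℕ :=
  sSup {k | ∃ D : MStanleyDec gr, k = D.sdepth}

/-- An `S`-submodule `N` of `M` is `ℤⁿ`-graded iff every element of `N` is a sum of
homogeneous elements of `N`. -/
def IsGradedSub (gr : Multigrading n K M) (N : Submodule (MvPolynomial (Fin n) K) M) :
    Prop :=
  N.restrictScalars K ≤ ⨆ a : Fin n → ℤ, (N.restrictScalars K ⊓ gr.grade a)

/-- A prime filtration of the `ℤⁿ`-graded module `M`: a chain
`0 = N 0 ⊆ N 1 ⊆ ⋯ ⊆ N m = M` of `ℤⁿ`-graded `S`-submodules such that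
`N (i+1) / N i ≅ (S/P i)(-a_i)`, i.e. `N (i+1) / N i` is generated by the class of a
homogeneous element `u i` of degree `deg i` whose annihilator modulo `N i` is the
monomial prime ideal `P i`. -/
structure MPrimeFiltration (gr : Multigrading n K M) where
  m : ℕ
  N : Fin (m + 1) → Submodule (MvPolynomial (Fin n) K) M
  u : Fin m → M
  deg : Fin m → (Fin n → ℤ)
  P : Fin m → Ideal (MvPolynomial (Fin n) K)
  bot : N 0 = ⊥
  top : N (Fin.last m) = ⊤
  graded : ∀ i, IsGradedSub gr (N i)
  homog : ∀ i, u i ∈ gr.grade (deg i)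
  gen : ∀ i, N i.succ = N i.castSucc ⊔ Submodule.span (MvPolynomial (Fin n) K) {u i}
  ann : ∀ i, ∀ s : MvPolynomial (Fin n) K, s • u i ∈ N i.castSucc ↔ s ∈ P i
  isPrime : ∀ i, IsMonomialPrime (P i)

/-- The support of a prime filtration. -/
def MPrimeFiltration.supp {gr : Multigrading n K M} (F : MPrimeFiltration gr) :
    Set (Ideal (MvPolynomial (Fin n) K)) :=
  Set.range F.P

/-- `fdepth ℱ = min { dim S/P : P ∈ supp ℱ }`. -/
noncomputable def MPrimeFiltration.fdepth {gr : Multigrading n K M}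
    (F : MPrimeFiltration gr) : WithBot ℕ∞ :=
  ⨅ i : Fin F.m, ringKrullDim (MvPolynomial (Fin n) K ⧸ F.P i)

/-- The set `Z_i = {x_j : x_j ∉ P i}` of variables attached to the `i`-th prime of a
prime filtration. -/
noncomputable def MPrimeFiltration.inducedZ {n : ℕ} {K : Type} [Field K] {M : Type} [AddCommGroup M]
    [Module K M] [Module (MvPolynomial (Fin n) K) M]
    [IsScalarTower K (MvPolynomial (Fin n) K) M] {gr : Multigrading n K M}
    (F : MPrimeFiltration gr) (i : Fin F.m) : Finset (Fin n) :=
  open Classical in Finset.univ.filter fun j => (X j : MvPolynomial (Fin n) K) ∉ F.P i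

/-- The Stanley decomposition `D` is induced by the prime filtration `F`: up to a
relabeling, the Stanley spaces of `D` are exactly the spaces `u_i K[Z_i]` coming from
the filtration, with `u_i` the chosen homogeneous generator of `M_i/M_{i-1}` and
`Z_i = {x_j : x_j ∉ P_i}`. -/
def MPrimeFiltration.Induces {n : ℕ} {K : Type} [Field K] {M : Type} [AddCommGroup M]
    [Module K M] [Module (MvPolynomial (Fin n) K) M]
    [IsScalarTower K (MvPolynomial (Fin n) K) M] {gr : Multigrading n K M}
    (F : MPrimeFiltration gr) (D : MStanleyDec gr) : Prop :=
  ∃ e : Fin D.m ≃ Fin F.m, ∀ i, D.u i = F.u (e i) ∧ D.deg i = F.deg (e i) ∧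
    D.Z i = F.inducedZ (e i)

/-! Given a relabeling `σ`, write `M_t` for the sum of the Stanley spaces `u_i K[Z_i]` with
`σ i < t`, and `P = (x_k : k ∉ Z)` for the monomial prime attached to a space `u K[Z]`.
Every `s ∈ S` splits as `s = a + p` with `a` a `K`-combination of monomials in the variables
of `Z` and `p ∈ P`, so `s • u ∈ a • u + P • u ⊆ u K[Z] + P • u`.

If the `M_t` are `S`-submodules they form a prime filtration with `M_{t+1} = M_t + S u`.
For `k ∉ Z` the element `x_k u ∈ M_{t+1} = M_t ⊕ u K[Z]` is homogeneous of a degree that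
does not occur in `u K[Z]`, so it lies in the graded module `M_t`; hence `P u ⊆ M_t`.
Conversely, if `s u ∈ M_t` then `a u ∈ M_t ∩ u K[Z] = 0`, and freeness of `u K[Z]` gives
`a = 0`, so `s ∈ P`: the annihilator of `u` modulo `M_t` is exactly `P`.

If instead `D` is induced by a prime filtration `N`, then `P_i u_i ⊆ N_i` and the splitting
gives `N_{i+1} = N_i + u_i K[Z_i]`, so by induction every `N_t` is the partial sum `M_t`. -/

theorem mem_of_mem_sup_of_iSupIndep {ι R N : Type*} [Ring R] [AddCommGroup N] [Module R N]
    {g : ι → Submodule R N} (hg : iSupIndep g) {Q W : Submodule R N}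
    (hQ : Q ≤ ⨆ a, Q ⊓ g a) {d : ι} (hW : W ≤ ⨆ a, ⨆ _ : a ≠ d, g a) {v : N}
    (hv : v ∈ g d) (hvQW : v ∈ Q ⊔ W) : v ∈ Q := by
  have hsplit : Q ⊔ W ≤ (Q ⊓ g d) ⊔ ⨆ a, ⨆ _ : a ≠ d, g a := by
    refine sup_le (hQ.trans ?_) (hW.trans le_sup_right)
    rw [iSup_split_single _ d]
    exact sup_le_sup_left (iSup₂_mono fun _ _ => inf_le_right) _
  obtain ⟨q, hq, r, hr, rfl⟩ := Submodule.mem_sup.mp (hsplit hvQW)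
  have hr0 : r = 0 :=
    Submodule.disjoint_def.mp (hg d) r ((Submodule.add_mem_iff_right _ hq.2).mp hv) hr
  simpa [hr0] using hq.1

section PartialSup

variable {α ι : Type*} [CompleteLattice α] {m : ℕ} (e : ι ≃ Fin m) (T : ι → α)

def partialSup (t : ℕ) : α :=
  ⨆ i, ⨆ _ : (e i : ℕ) < t, T i

@[simp]
theorem partialSup_zero : partialSup e T 0 = ⊥ := by
  simp [partialSup]

theorem le_partialSup {i : ι} {t : ℕ} (h : (e i : ℕ) < t) : T i ≤ partialSup e T t :=
  le_iSup₂ (f := fun i _ => T i) i h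

theorem partialSup_succ (j : Fin m) :
    partialSup e T (j + 1) = partialSup e T j ⊔ T (e.symm j) := by
  refine le_antisymm (iSup₂_le fun i hi => ?_)
    (sup_le (iSup₂_mono' fun i hi => ⟨i, ?_, le_rfl⟩) (le_partialSup e T (by simp)))
  · rcases Nat.lt_succ_iff_lt_or_eq.mp hi with hi | hi
    · exact le_sup_of_le_left (le_partialSup e T hi)
    · rw [e.eq_symm_apply.mpr (Fin.ext hi)]
      exact le_sup_right
  · omega

theorem partialSup_of_le {t : ℕ} (h : m ≤ t) : partialSup e T t = ⨆ i, T i :=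
  iSup_congr fun i => iSup_pos ((e i).isLt.trans_le h)

theorem disjoint_partialSup (hT : iSupIndep T) (i : ι) :
    Disjoint (partialSup e T (e i)) (T i) :=
  ((hT i).mono_right <|
    iSup₂_mono' fun j hj => ⟨j, fun hji => by simp [hji] at hj, le_rfl⟩).symm

end PartialSup

section MvPolynomial

variable {σ R : Type*} [CommSemiring R]

theorem X_mem_ideal_span_X_image_iff [Nontrivial R] {s : Set σ} {j : σ} :
    (X j : MvPolynomial σ R) ∈ Ideal.span (X '' s) ↔ j ∈ s := by
  classical
  simp [mem_ideal_span_X_image, support_X, Finsupp.single_apply]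

theorem restrictSupport_sup_span_X_compl (s : Set σ) :
    restrictSupport R {e : σ →₀ ℕ | ∀ j ∉ s, e j = 0} ⊔
      (Ideal.span (X '' sᶜ : Set (MvPolynomial σ R))).restrictScalars R = ⊤ := by
  classical
  refine eq_top_iff.mpr fun p _ => p.induction_on' (fun d c => ?_) fun p q => add_mem
  by_cases hd : ∀ j ∉ s, d j = 0
  · exact Submodule.mem_sup_left ((monomial_mem_restrictSupport R).mpr (Or.inl hd))
  · push Not at hd
    obtain ⟨j, hj, hdj⟩ := hd
    refine Submodule.mem_sup_right (mem_ideal_span_X_image.mpr fun d' hd' => ?_)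
    rw [Finset.mem_singleton.mp (support_monomial_subset hd')]
    exact ⟨j, hj, hdj⟩

end MvPolynomial

theorem smul_mem_of_mem_ideal_span {S N : Type*} [CommSemiring S] [AddCommMonoid N]
    [Module S N] {P : Submodule S N} {G : Set S} {u : N} (hG : ∀ g ∈ G, g • u ∈ P) {s : S}
    (hs : s ∈ Ideal.span G) : s • u ∈ P :=
  Submodule.mem_colon_singleton.mp <|
    (Ideal.span_le.mpr fun g hg => Submodule.mem_colon_singleton.mpr (hG g hg)) hs

def ofSMulMem {R S N : Type*} [Semiring R] [Semiring S] [AddCommMonoid N] [Module R N]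
    [Module S N] (Q : Submodule R N) (hQ : ∀ (s : S) (x : N), x ∈ Q → s • x ∈ Q) :
    Submodule S N where
  carrier := Q
  add_mem' := Q.add_mem
  zero_mem' := Q.zero_mem
  smul_mem' s _ hx := hQ s _ hx

@[simp]
theorem restrictScalars_ofSMulMem {R S N : Type*} [Semiring R] [Semiring S] [AddCommMonoid N]
    [Module R N] [Module S N] [SMul R S] [IsScalarTower R S N] (Q : Submodule R N)
    (hQ : ∀ (s : S) (x : N), x ∈ Q → s • x ∈ Q) :
    (ofSMulMem Q hQ).restrictScalars R = Q :=
  rfl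

section StanleySpace

variable {u : M} {Z : Finset (Fin n)}

omit [IsScalarTower K (MvPolynomial (Fin n) K) M] in
theorem mStanleySpace_le_iff {W : Submodule K M} :
    mStanleySpace u Z ≤ W ↔ ∀ e : Fin n →₀ ℕ, (∀ j ∉ Z, e j = 0) →
      (monomial e (1 : K) : MvPolynomial (Fin n) K) • u ∈ W := by
  rw [mStanleySpace, Submodule.span_le, Set.image_subset_iff]
  rfl

omit [IsScalarTower K (MvPolynomial (Fin n) K) M] in
theorem self_mem_mStanleySpace : u ∈ mStanleySpace (K := K) u Z := by
  simpa using mStanleySpace_le_iff.mp le_rfl 0 fun _ _ => rfl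

theorem mStanleySpace_eq_map (u : M) (Z : Finset (Fin n)) :
    mStanleySpace u Z = (restrictSupport K {e : Fin n →₀ ℕ | ∀ j ∉ Z, e j = 0}).map
      ((LinearMap.toSpanSingleton (MvPolynomial (Fin n) K) M u).restrictScalars K) := by
  rw [restrictSupport_eq_span, Submodule.map_span, Set.image_image]
  rfl

theorem mStanleySpace_le_span_singleton :
    mStanleySpace u Z ≤ (Submodule.span (MvPolynomial (Fin n) K) {u}).restrictScalars K :=
  mStanleySpace_le_iff.mpr fun _ _ =>
    Submodule.smul_mem _ _ (Submodule.mem_span_singleton_self u)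

omit [Module K M] [IsScalarTower K (MvPolynomial (Fin n) K) M] in
theorem smul_mem_of_mem_span_X_compl {N : Submodule (MvPolynomial (Fin n) K) M}
    (hX : ∀ k ∉ Z, (X k : MvPolynomial (Fin n) K) • u ∈ N) {p : MvPolynomial (Fin n) K}
    (hp : p ∈ Ideal.span (X '' (Z : Set (Fin n))ᶜ)) : p • u ∈ N :=
  smul_mem_of_mem_ideal_span (by rintro _ ⟨k, hk, rfl⟩; exact hX k hk) hp

theorem restrictScalars_sup_span_singleton {N : Submodule (MvPolynomial (Fin n) K) M}
    (hX : ∀ k ∉ Z, (X k : MvPolynomial (Fin n) K) • u ∈ N) :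
    (N ⊔ Submodule.span (MvPolynomial (Fin n) K) {u}).restrictScalars K =
      N.restrictScalars K ⊔ mStanleySpace u Z := by
  refine le_antisymm (fun x hx => ?_) (sup_le (Submodule.restrictScalars_mono K le_sup_left)
    (mStanleySpace_le_span_singleton.trans (Submodule.restrictScalars_mono K le_sup_right)))
  obtain ⟨y, hy, _, hsu, rfl⟩ := Submodule.mem_sup.mp hx
  obtain ⟨s, rfl⟩ := Submodule.mem_span_singleton.mp hsu
  obtain ⟨a, ha, p, hp, rfl⟩ := Submodule.mem_sup.mp <|
    restrictSupport_sup_span_X_compl (R := K) (Z : Set (Fin n)) ▸ Submodule.mem_top (x := s)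
  rw [add_smul, add_left_comm]
  refine add_mem (Submodule.mem_sup_right ?_) (Submodule.mem_sup_left (add_mem hy ?_))
  · rw [mStanleySpace_eq_map]
    exact Submodule.mem_map_of_mem ha
  · exact smul_mem_of_mem_span_X_compl hX hp


theorem disjoint_restrictSupport_ker
    (hfree : LinearIndependent K fun e : {e : Fin n →₀ ℕ // ∀ j ∉ Z, e j = 0} =>
      (monomial (e : Fin n →₀ ℕ) (1 : K) : MvPolynomial (Fin n) K) • u) :
    Disjoint (restrictSupport K {e : Fin n →₀ ℕ | ∀ j ∉ Z, e j = 0})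
      (LinearMap.ker
        ((LinearMap.toSpanSingleton (MvPolynomial (Fin n) K) M u).restrictScalars K)) := by
  rw [restrictSupport_eq_span, Set.image_eq_range]
  exact Submodule.range_ker_disjoint hfree

theorem smul_mem_iff_mem_span_X_compl {N : Submodule (MvPolynomial (Fin n) K) M}
    (hfree : LinearIndependent K fun e : {e : Fin n →₀ ℕ // ∀ j ∉ Z, e j = 0} =>
      (monomial (e : Fin n →₀ ℕ) (1 : K) : MvPolynomial (Fin n) K) • u)
    (hdisj : Disjoint (N.restrictScalars K) (mStanleySpace u Z))
    (hX : ∀ k ∉ Z, (X k : MvPolynomial (Fin n) K) • u ∈ N) (s : MvPolynomial (Fin n) K) :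
    s • u ∈ N ↔ s ∈ Ideal.span (X '' ↑Zᶜ) := by
  rw [Finset.coe_compl]
  refine ⟨fun hs => ?_, smul_mem_of_mem_span_X_compl hX⟩
  obtain ⟨a, ha, p, hp, rfl⟩ := Submodule.mem_sup.mp <|
    restrictSupport_sup_span_X_compl (R := K) (Z : Set (Fin n)) ▸ Submodule.mem_top (x := s)
  have hau : a • u = 0 := by
    refine Submodule.disjoint_def.mp hdisj _ ?_ ?_
    · simpa [add_smul] using sub_mem hs (smul_mem_of_mem_span_X_compl hX hp)
    · rw [mStanleySpace_eq_map]
      exact Submodule.mem_map_of_mem ha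
  have ha0 : a = 0 := Submodule.disjoint_def.mp (disjoint_restrictSupport_ker hfree) a ha hau
  simpa [ha0] using hp

omit [IsScalarTower K (MvPolynomial (Fin n) K) M] in
theorem mStanleySpace_le_iSup_inf_grade (gr : Multigrading n K M) {d : Fin n → ℤ}
    (hu : u ∈ gr.grade d) {Q : Submodule K M} (hQ : mStanleySpace u Z ≤ Q) :
    mStanleySpace u Z ≤ ⨆ a, Q ⊓ gr.grade a :=
  mStanleySpace_le_iff.mpr fun e he => Submodule.mem_iSup_of_mem _
    ⟨mStanleySpace_le_iff.mp hQ e he, gr.smul_mem e d u hu⟩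

omit [IsScalarTower K (MvPolynomial (Fin n) K) M] in
theorem mStanleySpace_le_iSup_grade_ne (gr : Multigrading n K M) {d : Fin n → ℤ}
    (hu : u ∈ gr.grade d) {k : Fin n} (hk : k ∉ Z) :
    mStanleySpace u Z ≤ ⨆ a, ⨆ _ : a ≠ d + fun i => ((Finsupp.single k 1 : Fin n →₀ ℕ) i : ℤ),
      gr.grade a :=
  mStanleySpace_le_iff.mpr fun e he => Submodule.mem_iSup_of_mem _ <|
    Submodule.mem_iSup_of_mem (fun h => by simpa [he k hk] using congrFun h k)
      (gr.smul_mem e d u hu)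

end StanleySpace

namespace MStanleyDec

variable {gr : Multigrading n K M} (D : MStanleyDec gr)

def space (i : Fin D.m) : Submodule K M :=
  mStanleySpace (D.u i) (D.Z i)

omit [IsScalarTower K (MvPolynomial (Fin n) K) M] in
theorem partialSup_le_iSup_inf_grade {m : ℕ} (e : Fin D.m ≃ Fin m) (t : ℕ) :
    partialSup e D.space t ≤ ⨆ a, partialSup e D.space t ⊓ gr.grade a :=
  iSup₂_le fun i hi => mStanleySpace_le_iSup_inf_grade gr (D.homog i) (le_partialSup e D.space hi)

omit [IsScalarTower K (MvPolynomial (Fin n) K) M] in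
theorem partialSup_eq_top {m : ℕ} (e : Fin D.m ≃ Fin m) {t : ℕ} (ht : m ≤ t) :
    partialSup e D.space t = ⊤ :=
  (partialSup_of_le e D.space ht).trans D.internal.submodule_iSup_eq_top

section SMulClosed

variable {D} (σ : Equiv.Perm (Fin D.m))
  (hσ : ∀ (t : ℕ) (s : MvPolynomial (Fin n) K) (x : M),
    x ∈ partialSup σ D.space t → s • x ∈ partialSup σ D.space t)

include hσ

omit [IsScalarTower K (MvPolynomial (Fin n) K) M] in
theorem X_smul_mem_partialSup (j : Fin D.m) :
    ∀ k ∉ D.Z (σ.symm j), (X k : MvPolynomial (Fin n) K) • D.u (σ.symm j) ∈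
      partialSup σ D.space j := by
  intro k hk
  have hmem : (X k : MvPolynomial (Fin n) K) • D.u (σ.symm j) ∈
      partialSup σ D.space j ⊔ D.space (σ.symm j) := by
    rw [← partialSup_succ]
    exact hσ _ _ _ (le_partialSup σ D.space (by simp) self_mem_mStanleySpace)
  exact mem_of_mem_sup_of_iSupIndep gr.internal.submodule_iSupIndep
    (D.partialSup_le_iSup_inf_grade σ j) (mStanleySpace_le_iSup_grade_ne gr (D.homog _) hk)
    (gr.smul_mem _ _ _ (D.homog _)) hmem

noncomputable def toPrimeFiltration : MPrimeFiltration gr where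
  m := D.m
  N j := ofSMulMem (partialSup σ D.space j) (hσ j)
  u j := D.u (σ.symm j)
  deg j := D.deg (σ.symm j)
  P j := Ideal.span (X '' ↑(D.Z (σ.symm j))ᶜ)
  bot := Submodule.restrictScalars_injective K _ _ (by simp)
  top := Submodule.restrictScalars_injective K _ _
    (by simp [D.partialSup_eq_top σ le_rfl])
  graded j := D.partialSup_le_iSup_inf_grade σ j
  homog j := D.homog _
  gen j := by
    apply Submodule.restrictScalars_injective K
    simp only [Fin.val_castSucc, Fin.val_succ]
    rw [restrictScalars_sup_span_singleton (N := ofSMulMem (partialSup σ D.space j) (hσ j))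
      (X_smul_mem_partialSup σ hσ j), restrictScalars_ofSMulMem, restrictScalars_ofSMulMem,
      partialSup_succ]
    rfl
  ann j := smul_mem_iff_mem_span_X_compl (D.free _)
    (by
      have := disjoint_partialSup σ D.space D.internal.submodule_iSupIndep (σ.symm j)
      rwa [Equiv.apply_symm_apply] at this)
    (X_smul_mem_partialSup σ hσ j)
  isPrime j := ⟨_, rfl⟩

theorem toPrimeFiltration_induces : (toPrimeFiltration σ hσ).Induces D := by
  have hZ (j : Fin D.m) : (toPrimeFiltration σ hσ).inducedZ j = D.Z (σ.symm j) := by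
    ext k
    simp [toPrimeFiltration, MPrimeFiltration.inducedZ, X_mem_ideal_span_X_image_iff]
  refine ⟨σ, fun i => ?_⟩
  have hi : σ.symm (σ i) = i := σ.symm_apply_apply i
  exact ⟨congrArg D.u hi.symm, congrArg D.deg hi.symm,
    (congrArg D.Z hi.symm).trans (hZ (σ i)).symm⟩

end SMulClosed

end MStanleyDec

namespace MPrimeFiltration

variable {gr : Multigrading n K M} (F : MPrimeFiltration gr) {D : MStanleyDec gr}
  {e : Fin D.m ≃ Fin F.m}
  (he : ∀ i, D.u i = F.u (e i) ∧ D.deg i = F.deg (e i) ∧ D.Z i = F.inducedZ (e i))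
include he

theorem restrictScalars_N_eq_partialSup (j : Fin (F.m + 1)) :
    (F.N j).restrictScalars K = partialSup e D.space j := by
  induction j using Fin.induction with
  | zero => simp [F.bot]
  | succ j ih =>
    have hu : D.u (e.symm j) = F.u j := by simpa using (he (e.symm j)).1
    have hX : ∀ k ∉ D.Z (e.symm j),
        (X k : MvPolynomial (Fin n) K) • F.u j ∈ F.N j.castSucc :=
      fun k hk => (F.ann j _).mpr (by simpa [(he _).2.2, inducedZ] using hk)
    rw [F.gen, restrictScalars_sup_span_singleton hX, ih, Fin.val_succ, partialSup_succ,
      Fin.val_castSucc, MStanleyDec.space, hu]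

theorem smul_mem_partialSup (t : ℕ) (s : MvPolynomial (Fin n) K) (x : M)
    (hx : x ∈ partialSup e D.space t) : s • x ∈ partialSup e D.space t := by
  rcases le_or_gt t F.m with ht | ht
  · rw [← F.restrictScalars_N_eq_partialSup he ⟨t, by omega⟩] at hx ⊢
    exact (F.N _).smul_mem s hx
  · rw [D.partialSup_eq_top e ht.le]
    trivial

end MPrimeFiltration

theorem induced_by_prime_filtration_iff_partial_sums_are_submodules_general
    {n : ℕ} {K : Type} [Field K] {M : Type} [AddCommGroup M] [Module K M]
    [Module (MvPolynomial (Fin n) K) M] [IsScalarTower K (MvPolynomial (Fin n) K) M]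
    {gr : Multigrading n K M} (D : MStanleyDec gr) :
    (∃ F : MPrimeFiltration gr, F.Induces D) ↔
    (∃ σ : Equiv.Perm (Fin D.m), ∀ t : ℕ, ∀ s : MvPolynomial (Fin n) K,
      ∀ x ∈ (⨆ i : Fin D.m, ⨆ _ : (σ i : ℕ) < t, mStanleySpace (K := K) (D.u i) (D.Z i)),
        s • x ∈ (⨆ i : Fin D.m, ⨆ _ : (σ i : ℕ) < t,
          mStanleySpace (K := K) (D.u i) (D.Z i))) := by
  constructor
  · rintro ⟨F, e, he⟩
    exact ⟨e.trans (finCongr (Fin.equiv_iff_eq.mp ⟨e⟩).symm), F.smul_mem_partialSup he⟩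
  · rintro ⟨σ, hσ⟩
    exact ⟨MStanleyDec.toPrimeFiltration σ hσ, MStanleyDec.toPrimeFiltration_induces σ hσ⟩

/-- **Proposition.** A Stanley decomposition `D : M = ⊕ᵢ uᵢK[Zᵢ]` of a finitely
generated `ℤⁿ`-graded `S`-module `M` is induced by a prime filtration if and only if,
after a suitable relabeling of the summands, all partial sums `⊕_{i≤j} uᵢK[Zᵢ]` are
(`ℤⁿ`-graded) `S`-submodules of `M`. -/
theorem induced_by_prime_filtration_iff_partial_sums_are_submodules
    {n : ℕ} {K : Type} [Field K] {M : Type} [AddCommGroup M] [Module K M]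
    [Module (MvPolynomial (Fin n) K) M] [IsScalarTower K (MvPolynomial (Fin n) K) M]
    [Module.Finite (MvPolynomial (Fin n) K) M]
    {gr : Multigrading n K M} (D : MStanleyDec gr) :
    (∃ F : MPrimeFiltration gr, F.Induces D) ↔
    (∃ σ : Equiv.Perm (Fin D.m), ∀ t : ℕ, ∀ s : MvPolynomial (Fin n) K,
      ∀ x ∈ (⨆ i : Fin D.m, ⨆ _ : (σ i : ℕ) < t, mStanleySpace (K := K) (D.u i) (D.Z i)),
        s • x ∈ (⨆ i : Fin D.m, ⨆ _ : (σ i : ℕ) < t,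
          mStanleySpace (K := K) (D.u i) (D.Z i))) :=
  induced_by_prime_filtration_iff_partial_sums_are_submodules_general D

end StanleyPaper
end
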